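/- Let ω = (ω₀, …, ω_{n+1}) be a primitive algebraic key sequence and θ ∈ (ℂ*)ⁿ, and let Ĝ₁, …, Ĝ_n ∈ Â := ℂ[ŵ, ŷ₁, …, ŷ_{n+1}] be as above, Ĝ_k := ŵ^{α_k·ω_k − ω_{k+1}}·ŷ_{k+1} − ( ŷ_k^{α_k} − θ_k·∏_{j=1}^{k−1} ŷ_j^{β_{k,j}} ). Let ω̂ := (0, ω₁, …, ω_{n+1}) assign weight 0 to ŵ and weight ω_j to ŷ_j, and define the relation ≺ on exponent vectors β, β′ ∈ ℕ^{n+2} (coordinates ordered ŵ, ŷ₁, …, ŷ_{n+1}) by: β ≺ β′ iff either (β − β′)·ω̂ < 0, or (β − β′)·ω̂ = 0 and the rightmost nonzero entry of β − β′ is negative. Then (1) ≺ induces a monomial order on Â (a linear order on monomials, compatible with multiplication, in which 1 is the least monomial), and (2) for each 1 ≤ k ≤ n the ≺-largest monomial occurring in Ĝ_k is ŷ_k^{α_k} (which occurs in Ĝ_k with coefficient −1). -/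

import Mathlib

/-!
`≺` is the pull-back of the lexicographic order of `ℤ ×ₗ Lex (ιᵒᵈ → ℕ)` along the injective
additive map `u ↦ (u·ω̂, u)`. Hence it is a strict total order compatible with addition, and
since `ω̂ ≥ 0` for a primitive key sequence, every nonzero exponent vector lies above `0`.

`Ĝ_k` has the three monomials `ŵ^a·ŷ_{k+1}`, `ŷ_k^{α_k}` and `∏ ŷ_j^{β_{k,j}}`. The first has
weight `ω_{k+1} < α_k·ω_k`; the last has weight `α_k·ω_k − β_{k,0}·ω₀ ≤ α_k·ω_k` and loses a
possible tie at the coordinate of `ŷ_k`. The inequality needs `β_{k,0} ≥ 0`: algebraicity gives a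
nonnegative representation of `α_k·ω_k`, carrying (`c_j·ω_j = r·ω_j + q·α_j·ω_j`, top index first)
brings it into the digit range `0 ≤ b_j < α_j` without making `b₀` negative, and such
representations are unique because `α_j` divides the `j`-th coefficient of every vanishing
integer combination of `ω₀, …, ω_j`.
-/

open Fin.NatCast

/-- `dks ω k` is `gcd(|ω₀|, …, |ω_k|)`. -/
def dks (ω : ℕ → ℤ) (k : ℕ) : ℕ :=
  (Finset.range (k + 1)).gcd fun j => (ω j).natAbs

/-- `alphaK ω k` is `α_k = d_{k−1}/d_k`. -/
def alphaK (ω : ℕ → ℤ) (k : ℕ) : ℕ := dks ω (k - 1) / dks ω k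

/-- A key sequence `(ω₀, …, ω_{n+1})`. -/
def IsKeySequence (n : ℕ) (ω : ℕ → ℤ) : Prop :=
  1 ≤ ω 0 ∧ dks ω (n + 1) = 1 ∧
    ∀ k, 1 ≤ k → k ≤ n → ω (k + 1) < (alphaK ω k : ℤ) * ω k

/-- A key sequence is primitive iff `ω_{n+1} > 0`. -/
def IsPrimitive (n : ℕ) (ω : ℕ → ℤ) : Prop := 0 < ω (n + 1)

/-- `β k` is, for `1 ≤ k ≤ n`, the unique representation tuple of `α_k·ω_k`. -/
def IsRepTuple (n : ℕ) (ω : ℕ → ℤ) (β : ℕ → ℕ → ℤ) : Prop :=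
  ∀ k, 1 ≤ k → k ≤ n →
    (∀ j, 1 ≤ j → j < k → 0 ≤ β k j ∧ β k j < (alphaK ω j : ℤ)) ∧
      (alphaK ω k : ℤ) * ω k = ∑ j ∈ Finset.range k, β k j * ω j

/-- The polynomial `Ĝ_k = ŵ^{α_k·ω_k − ω_{k+1}}·ŷ_{k+1} − (ŷ_k^{α_k} − θ_k·∏_{j=1}^{k−1} ŷ_j^{β_{k,j}})`
in `Â = ℂ[ŵ, ŷ₁, …, ŷ_{n+1}]`, where `ŵ` is the variable of index `0` and `ŷ_j` the
variable of index `j`. -/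
noncomputable def Ghat (n : ℕ) (ω : ℕ → ℤ) (θ : ℕ → ℂ) (β : ℕ → ℕ → ℤ) (k : ℕ) :
    MvPolynomial (Fin (n + 2)) ℂ :=
  MvPolynomial.X (0 : Fin (n + 2)) ^ (((alphaK ω k : ℤ) * ω k - ω (k + 1)).toNat) *
      MvPolynomial.X ((k + 1 : ℕ) : Fin (n + 2)) -
    (MvPolynomial.X ((k : ℕ) : Fin (n + 2)) ^ alphaK ω k -
      MvPolynomial.C (θ k) *
        ∏ j ∈ Finset.Ico 1 k, MvPolynomial.X ((j : ℕ) : Fin (n + 2)) ^ (β k j).toNat)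

/-- The ideal `Î = (Ĝ₁, …, Ĝ_n) ⊆ Â`. -/
noncomputable def Ihat (n : ℕ) (ω : ℕ → ℤ) (θ : ℕ → ℂ) (β : ℕ → ℕ → ℤ) :
    Ideal (MvPolynomial (Fin (n + 2)) ℂ) :=
  Ideal.span (Ghat n ω θ β '' Set.Icc 1 n)

/-- The algebraicity condition: `α_k·ω_k ∈ ℤ_{≥0}⟨ω₀, …, ω_{k−1}⟩` for `1 ≤ k ≤ n`. -/
def IsAlgebraicKeySeq (n : ℕ) (ω : ℕ → ℤ) : Prop :=
  ∀ k, 1 ≤ k → k ≤ n → ∃ c : ℕ → ℕ,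
    (alphaK ω k : ℤ) * ω k = ∑ j ∈ Finset.range k, (c j : ℤ) * ω j

/-- The weight vector `ω̂ = (0, ω₁, …, ω_{n+1})`: weight `0` for `ŵ` and `ω_j` for `ŷ_j`. -/
def omegaHat (n : ℕ) (ω : ℕ → ℤ) (i : Fin (n + 2)) : ℤ :=
  if i = 0 then 0 else ω (i : ℕ)

/-- The order `≺` on exponent vectors: `u ≺ v` iff `(u − v)·ω̂ < 0`, or
`(u − v)·ω̂ = 0` and the rightmost nonzero entry of `u − v` is negative. -/
def Prec (n : ℕ) (ω : ℕ → ℤ) (u v : Fin (n + 2) →₀ ℕ) : Prop :=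
  (∑ i : Fin (n + 2), ((u i : ℤ) - (v i : ℤ)) * omegaHat n ω i) < 0 ∨
    ((∑ i : Fin (n + 2), ((u i : ℤ) - (v i : ℤ)) * omegaHat n ω i) = 0 ∧
      ∃ i : Fin (n + 2), (u i : ℤ) < (v i : ℤ) ∧ ∀ j, i < j → u j = v j)

open Finset

theorem toLex_comp_ofDual_lt_iff {ι : Type*} [LinearOrder ι] (u v : ι → ℕ) :
    (toLex fun i => u (OrderDual.ofDual i)) < (toLex fun i => v (OrderDual.ofDual i)) ↔
      ∃ i, u i < v i ∧ ∀ j, i < j → u j = v j :=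
  ⟨fun ⟨i, heq, hlt⟩ => ⟨OrderDual.ofDual i, hlt, fun j hj => heq (OrderDual.toDual j) hj⟩,
    fun ⟨i, hlt, heq⟩ => ⟨OrderDual.toDual i, fun j hj => heq (OrderDual.ofDual j) hj, hlt⟩⟩

section WeightedColex

variable {ι : Type*} [Fintype ι] (w : ι → ℤ)

noncomputable def weight : (ι →₀ ℕ) →+ ℤ :=
  AddMonoidHom.mk' (fun u => ∑ i, (u i : ℤ) * w i) fun u v => by
    simp only [Finsupp.coe_add, Pi.add_apply, Nat.cast_add, add_mul, sum_add_distrib]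

theorem weight_apply (u : ι →₀ ℕ) : weight w u = ∑ i, (u i : ℤ) * w i := rfl

theorem weight_single [DecidableEq ι] (i : ι) (a : ℕ) :
    weight w (Finsupp.single i a) = a * w i := by
  simp [weight_apply, Finsupp.single_apply]

theorem weight_nonneg (hw : 0 ≤ w) (u : ι →₀ ℕ) : 0 ≤ weight w u :=
  sum_nonneg fun i _ => mul_nonneg (Nat.cast_nonneg _) (hw i)

noncomputable def weightedColexKey : (ι →₀ ℕ) →+ ℤ ×ₗ Lex (ιᵒᵈ → ℕ) where
  toFun u := toLex (weight w u, toLex fun i => u (OrderDual.ofDual i))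
  map_zero' := by simp; rfl
  map_add' u v := by simp only [map_add, Finsupp.coe_add, Pi.add_apply]; rfl

theorem weightedColexKey_injective : Function.Injective (weightedColexKey w) := by
  intro u v h
  ext i
  exact congrFun (congrArg (fun x => ofLex (ofLex x).2) h) (OrderDual.toDual i)

variable [LinearOrder ι]

theorem weightedColexKey_lt_iff (u v : ι →₀ ℕ) :
    weightedColexKey w u < weightedColexKey w v ↔
      weight w u < weight w v ∨
        weight w u = weight w v ∧ ∃ i, u i < v i ∧ ∀ j, i < j → u j = v j := by
  simp only [weightedColexKey, AddMonoidHom.coe_mk, ZeroHom.coe_mk, Prod.Lex.toLex_lt_toLex,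
    toLex_comp_ofDual_lt_iff]

theorem weightedColexKey_pos (hw : 0 ≤ w) {u : ι →₀ ℕ} (hu : u ≠ 0) :
    0 < weightedColexKey w u := by
  rw [← map_zero (weightedColexKey w), weightedColexKey_lt_iff, map_zero]
  obtain ⟨i, hi, hmax⟩ : ∃ i, 0 < u i ∧ ∀ j, i < j → u j = 0 := by
    have hsupp : u.support.Nonempty := Finsupp.support_nonempty_iff.mpr hu
    refine ⟨u.support.max' hsupp, Nat.pos_of_ne_zero (Finsupp.mem_support_iff.mp
      (u.support.max'_mem hsupp)), fun j hj => Finsupp.notMem_support_iff.mp fun hmem => ?_⟩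
    exact (u.support.le_max' j hmem).not_gt hj
  rcases (weight_nonneg w hw u).lt_or_eq with hlt | heq
  · exact Or.inl hlt
  · exact Or.inr ⟨heq, i, hi, fun j hj => (hmax j hj).symm⟩

theorem weightedColexKey_lt_single {m : ι →₀ ℕ} {i : ι} {a : ℕ} (ha : 0 < a)
    (hweight : weight w m ≤ a * w i) (hm : ∀ j, i ≤ j → m j = 0) :
    weightedColexKey w m < weightedColexKey w (Finsupp.single i a) := by
  classical
  rw [weightedColexKey_lt_iff, weight_single]
  rcases hweight.lt_or_eq with hlt | heq
  · exact Or.inl hlt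
  · refine Or.inr ⟨heq, i, by simpa [hm i le_rfl] using ha, fun j hj => ?_⟩
    rw [hm j hj.le, Finsupp.single_apply, if_neg hj.ne]

end WeightedColex

theorem prec_iff_weightedColexKey_lt (n : ℕ) (ω : ℕ → ℤ) (u v : Fin (n + 2) →₀ ℕ) :
    Prec n ω u v ↔ weightedColexKey (omegaHat n ω) u < weightedColexKey (omegaHat n ω) v := by
  simp only [Prec, weightedColexKey_lt_iff, weight_apply, sub_mul, sum_sub_distrib, sub_neg,
    sub_eq_zero, Nat.cast_lt]

section KeySequence

variable {n : ℕ} {ω : ℕ → ℤ}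

theorem dks_pos (h0 : ω 0 ≠ 0) (k : ℕ) : 0 < dks ω k :=
  Nat.pos_of_ne_zero fun h =>
    h0 (Int.natAbs_eq_zero.mp ((gcd_eq_zero_iff.mp h) 0 (mem_range.mpr k.succ_pos)))

theorem dks_succ (k : ℕ) : dks ω (k + 1) = Nat.gcd (ω (k + 1)).natAbs (dks ω k) := by
  rw [dks, dks, range_add_one, gcd_insert]
  rfl

theorem dks_dvd {j k : ℕ} (hjk : j ≤ k) : (dks ω k : ℤ) ∣ ω j :=
  Int.natCast_dvd.mpr (Finset.gcd_dvd (mem_range.mpr (Nat.lt_succ_of_le hjk)))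

theorem alphaK_succ_mul_dks_succ (k : ℕ) : alphaK ω (k + 1) * dks ω (k + 1) = dks ω k :=
  Nat.div_mul_cancel (by rw [dks_succ]; exact Nat.gcd_dvd_right _ _)

theorem alphaK_pos (h0 : ω 0 ≠ 0) {k : ℕ} (hk : 1 ≤ k) : 0 < alphaK ω k := by
  obtain ⟨k, rfl⟩ := Nat.exists_eq_add_of_le' hk
  refine Nat.pos_of_ne_zero fun h => (dks_pos h0 k).ne' ?_
  rw [← alphaK_succ_mul_dks_succ, h, zero_mul]

theorem alphaK_succ_dvd_of_sum_eq_zero (h0 : ω 0 ≠ 0) (k : ℕ) (γ : ℕ → ℤ)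
    (hsum : ∑ j ∈ range (k + 2), γ j * ω j = 0) : (alphaK ω (k + 1) : ℤ) ∣ γ (k + 1) := by
  have hlast : (dks ω k : ℤ) ∣ γ (k + 1) * ω (k + 1) := by
    rw [sum_range_succ] at hsum
    rw [eq_neg_of_add_eq_zero_right hsum, dvd_neg]
    exact dvd_sum fun j hj => (dks_dvd (Nat.lt_succ_iff.mp (mem_range.mp hj))).mul_left _
  have hgcd : gcd (dks ω k : ℤ) (ω (k + 1)) = dks ω (k + 1) := by
    rw [← Int.coe_gcd, Int.gcd, Int.natAbs_natCast, dks_succ, Nat.gcd_comm]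
  rw [← dvd_mul_gcd_iff_dvd_mul, hgcd, ← alphaK_succ_mul_dks_succ, Nat.cast_mul] at hlast
  exact (mul_dvd_mul_iff_right (by exact_mod_cast (dks_pos h0 (k + 1)).ne')).mp hlast

theorem eq_zero_of_sum_eq_zero (h0 : ω 0 ≠ 0) (k : ℕ) (γ : ℕ → ℤ)
    (hsum : ∑ j ∈ range (k + 1), γ j * ω j = 0)
    (hγ : ∀ j, 1 ≤ j → j ≤ k → |γ j| < alphaK ω j) : ∀ j ≤ k, γ j = 0 := by
  induction k with
  | zero =>
    intro j hj
    rw [Nat.le_zero.mp hj]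
    simpa [h0] using hsum
  | succ k ih =>
    have htop : γ (k + 1) = 0 := Int.eq_zero_of_abs_lt_dvd
      (alphaK_succ_dvd_of_sum_eq_zero h0 k γ hsum) (hγ (k + 1) k.succ_pos le_rfl)
    rw [sum_range_succ, htop, zero_mul, add_zero] at hsum
    intro j hj
    rcases hj.lt_or_eq with hj | rfl
    · exact ih hsum (fun i hi hik => hγ i hi (hik.trans k.le_succ)) j (Nat.lt_succ_iff.mp hj)
    · exact htop

theorem IsKeySequence.pos (hω : IsKeySequence n ω) (hprim : IsPrimitive n ω) {k : ℕ}
    (hk : k ≤ n + 1) : 0 < ω k := by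
  induction hk using Nat.decreasingInduction with
  | self => exact hprim
  | of_succ k hk ih =>
    rcases k.eq_zero_or_pos with rfl | hk0
    · exact hω.1
    · exact pos_of_mul_pos_right (ih.trans (hω.2.2 k hk0 (by omega))) (Nat.cast_nonneg _)

theorem exists_reduced_rep (h0 : ω 0 ≠ 0) (halg : IsAlgebraicKeySeq n ω) {k : ℕ} (hk : 1 ≤ k)
    (hkn : k ≤ n + 1) (c : ℕ → ℕ) :
    ∃ b : ℕ → ℕ, (∀ j, 1 ≤ j → j < k → b j < alphaK ω j) ∧
      ∑ j ∈ range k, (b j : ℤ) * ω j = ∑ j ∈ range k, (c j : ℤ) * ω j := by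
  induction k, hk using Nat.le_induction generalizing c with
  | base => exact ⟨c, fun j hj hj1 => absurd hj1 (by omega), rfl⟩
  | succ k hk ih =>
    obtain ⟨e, he⟩ := halg k hk (by omega)
    set q := c k / alphaK ω k
    set r := c k % alphaK ω k
    obtain ⟨b, hb, hbsum⟩ := ih (by omega) fun j => c j + q * e j
    refine ⟨Function.update b k r, fun j hj hjk => ?_, ?_⟩
    · rcases (Nat.lt_succ_iff.mp hjk).lt_or_eq with hjk | rfl
      · rw [Function.update_of_ne hjk.ne]
        exact hb j hj hjk
      · rw [Function.update_self]
        exact Nat.mod_lt _ (alphaK_pos h0 hk)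
    · have hlow : ∑ j ∈ range k, (Function.update b k r j : ℤ) * ω j =
          ∑ j ∈ range k, (b j : ℤ) * ω j :=
        sum_congr rfl fun j hj => by rw [Function.update_of_ne (mem_range.mp hj).ne]
      have hck : (c k : ℤ) = alphaK ω k * q + r := by exact_mod_cast (Nat.div_add_mod _ _).symm
      rw [sum_range_succ, sum_range_succ, hlow, hbsum, Function.update_self, hck]
      simp only [Nat.cast_add, Nat.cast_mul, add_mul, sum_add_distrib, mul_assoc, ← mul_sum, ← he]
      ring

theorem IsRepTuple.zero_nonneg {β : ℕ → ℕ → ℤ} (h0 : ω 0 ≠ 0) (halg : IsAlgebraicKeySeq n ω)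
    (hβ : IsRepTuple n ω β) {k : ℕ} (hk : 1 ≤ k) (hkn : k ≤ n) : 0 ≤ β k 0 := by
  obtain ⟨hβsmall, hβsum⟩ := hβ k hk hkn
  obtain ⟨c, hc⟩ := halg k hk hkn
  obtain ⟨b, hb, hbsum⟩ := exists_reduced_rep h0 halg hk (by omega) c
  obtain ⟨k, rfl⟩ : ∃ k', k = k' + 1 := ⟨k - 1, by omega⟩
  have hunique := eq_zero_of_sum_eq_zero h0 k (fun j => β (k + 1) j - b j)
    (by simp only [sub_mul, sum_sub_distrib, hbsum, ← hc, ← hβsum, sub_self])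
    (fun j hj hjk => by
      have := hβsmall j hj (by omega)
      have := hb j hj (by omega)
      rw [abs_lt]
      constructor <;> omega) 0 (Nat.zero_le _)
  have hb0 : (0 : ℤ) ≤ b 0 := Nat.cast_nonneg _
  omega

end KeySequence

section Ghat

open MvPolynomial

variable {n : ℕ} {ω : ℕ → ℤ}

theorem omegaHat_natCast {k : ℕ} (hk : 1 ≤ k) (hkn : k ≤ n + 1) :
    omegaHat n ω (k : Fin (n + 2)) = ω k := by
  have hval : ((k : Fin (n + 2)) : ℕ) = k := Fin.val_cast_of_lt (by omega)
  rw [omegaHat, if_neg fun h => by rw [h, Fin.val_zero] at hval; omega, hval]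

theorem IsKeySequence.omegaHat_nonneg (hω : IsKeySequence n ω) (hprim : IsPrimitive n ω) :
    0 ≤ omegaHat n ω := fun i => by
  unfold omegaHat
  split_ifs
  · exact le_rfl
  · exact (hω.pos hprim (Nat.lt_succ_iff.mp i.isLt)).le

theorem Ghat_eq_monomials (θ : ℕ → ℂ) (β : ℕ → ℕ → ℤ) (k : ℕ) :
    Ghat n ω θ β k =
      monomial (Finsupp.single 0 ((alphaK ω k : ℤ) * ω k - ω (k + 1)).toNat +
          Finsupp.single ((k + 1 : ℕ) : Fin (n + 2)) 1) 1 -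
        monomial (Finsupp.single (k : Fin (n + 2)) (alphaK ω k)) 1 +
        monomial (∑ j ∈ Ico 1 k, Finsupp.single (j : Fin (n + 2)) (β k j).toNat) (θ k) := by
  rw [Ghat, ← pow_one (X ((k + 1 : ℕ) : Fin (n + 2)))]
  simp only [X_pow_eq_monomial, monomial_mul, ← monomial_sum_one, C_mul_monomial, mul_one]
  ring

theorem coeff_monomial_sub_monomial_add_monomial {R σ : Type*} [CommRing R] {a b c : σ →₀ ℕ}
    (hab : a ≠ b) (hcb : c ≠ b) (t : R) :
    coeff b (monomial a 1 - monomial b 1 + monomial c t) = -1 := by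
  classical
  simp [coeff_monomial, hab, hcb]

theorem eq_or_eq_of_mem_support_monomial_sub_monomial_add_monomial {R σ : Type*} [CommRing R]
    {a b c m : σ →₀ ℕ} {t : R} (hm : m ∈ (monomial a 1 - monomial b 1 + monomial c t).support)
    (hmb : m ≠ b) : m = a ∨ m = c := by
  classical
  by_contra! h
  rw [mem_support_iff, coeff_add, coeff_sub, coeff_monomial, coeff_monomial, coeff_monomial,
    if_neg (Ne.symm h.1), if_neg (Ne.symm hmb), if_neg (Ne.symm h.2)] at hm
  simp at hm

theorem sum_single_Ico_apply_eq_zero (e : ℕ → ℕ) {k : ℕ} (hkn : k < n + 2) {i : Fin (n + 2)}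
    (hi : ((k : ℕ) : Fin (n + 2)) ≤ i) :
    (∑ j ∈ Ico 1 k, Finsupp.single (j : Fin (n + 2)) (e j)) i = 0 := by
  rw [Finsupp.finsetSum_apply]
  refine sum_eq_zero fun j hj => Finsupp.single_eq_of_ne fun hij => ?_
  rw [mem_Ico] at hj
  rw [Fin.le_def, Fin.val_cast_of_lt hkn, hij, Fin.val_cast_of_lt (by omega)] at hi
  omega

theorem weight_tail_le {β : ℕ → ℕ → ℤ} (hω : IsKeySequence n ω) (halg : IsAlgebraicKeySeq n ω)
    (hβ : IsRepTuple n ω β) {k : ℕ} (hk : 1 ≤ k) (hkn : k ≤ n) :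
    weight (omegaHat n ω) (∑ j ∈ Ico 1 k, Finsupp.single (j : Fin (n + 2)) (β k j).toNat) ≤
      alphaK ω k * ω k := by
  have h0 : ω 0 ≠ 0 := by have := hω.1; omega
  rw [map_sum]
  calc ∑ j ∈ Ico 1 k, weight (omegaHat n ω) (Finsupp.single (j : Fin (n + 2)) (β k j).toNat)
      = ∑ j ∈ Ico 1 k, β k j * ω j := sum_congr rfl fun j hj => by
        rw [mem_Ico] at hj
        rw [weight_single, omegaHat_natCast hj.1 (by omega),
          Int.toNat_of_nonneg ((hβ k hk hkn).1 j hj.1 hj.2).1]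
    _ = alphaK ω k * ω k - β k 0 * ω 0 := by
        rw [(hβ k hk hkn).2, range_eq_Ico, sum_eq_sum_Ico_succ_bot hk]
        ring
    _ ≤ alphaK ω k * ω k :=
        sub_le_self _ (mul_nonneg (hβ.zero_nonneg h0 halg hk hkn) (by have := hω.1; omega))

theorem Ghat_leading_monomial {θ : ℕ → ℂ} {β : ℕ → ℕ → ℤ} (hω : IsKeySequence n ω)
    (halg : IsAlgebraicKeySeq n ω) (hβ : IsRepTuple n ω β) {k : ℕ} (hk : 1 ≤ k) (hkn : k ≤ n) :
    coeff (Finsupp.single (k : Fin (n + 2)) (alphaK ω k)) (Ghat n ω θ β k) = -1 ∧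
      ∀ m ∈ (Ghat n ω θ β k).support, m ≠ Finsupp.single (k : Fin (n + 2)) (alphaK ω k) →
        Prec n ω m (Finsupp.single (k : Fin (n + 2)) (alphaK ω k)) := by
  have h0 : ω 0 ≠ 0 := by have := hω.1; omega
  set K : Fin (n + 2) := ((k : ℕ) : Fin (n + 2))
  set K₁ : Fin (n + 2) := ((k + 1 : ℕ) : Fin (n + 2))
  set m₁ := Finsupp.single 0 ((alphaK ω k : ℤ) * ω k - ω (k + 1)).toNat + Finsupp.single K₁ 1
  set m₂ := Finsupp.single K (alphaK ω k)
  set m₃ := ∑ j ∈ Ico 1 k, Finsupp.single (j : Fin (n + 2)) (β k j).toNat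
  have hm₃ : ∀ i, K ≤ i → m₃ i = 0 := fun i => sum_single_Ico_apply_eq_zero _ (by omega)
  have hm₁₂ : m₁ ≠ m₂ := fun h => by
    have hK₁K : K₁ ≠ K := fun hKK => by
      rw [← Fin.val_inj, Fin.val_cast_of_lt (by omega), Fin.val_cast_of_lt (by omega)] at hKK
      omega
    have := congrArg (· K₁) h
    simp only [m₁, m₂, Finsupp.add_apply, Finsupp.single_eq_same,
      Finsupp.single_eq_of_ne hK₁K] at this
    omega
  have hm₃₂ : m₃ ≠ m₂ := fun h => by
    have := congrArg (· K) h
    simp only [hm₃ K le_rfl, m₂, Finsupp.single_eq_same] at this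
    exact (alphaK_pos h0 hk).ne this
  rw [Ghat_eq_monomials]
  refine ⟨coeff_monomial_sub_monomial_add_monomial hm₁₂ hm₃₂ _, fun m hm hm₂ => ?_⟩
  have hwK : omegaHat n ω K = ω k := omegaHat_natCast hk (by omega)
  rw [prec_iff_weightedColexKey_lt]
  rcases eq_or_eq_of_mem_support_monomial_sub_monomial_add_monomial hm hm₂ with rfl | rfl
  · refine (weightedColexKey_lt_iff _ _ _).mpr (Or.inl ?_)
    rw [map_add, weight_single, weight_single, weight_single, hwK,
      omegaHat_natCast (by omega) (by omega), omegaHat, if_pos rfl]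
    simpa using hω.2.2 k hk hkn
  · refine weightedColexKey_lt_single _ (alphaK_pos h0 hk) ?_ hm₃
    rw [hwK]
    exact weight_tail_le hω halg hβ hk hkn

end Ghat

theorem stmt7_general (n : ℕ) (ω : ℕ → ℤ) (θ : ℕ → ℂ) (β : ℕ → ℕ → ℤ)
    (hω : IsKeySequence n ω) (hprim : IsPrimitive n ω) (halg : IsAlgebraicKeySeq n ω)
    (hβ : IsRepTuple n ω β) :
    (∀ u, ¬ Prec n ω u u) ∧
    (∀ u v w, Prec n ω u v → Prec n ω v w → Prec n ω u w) ∧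
    (∀ u v, u ≠ v → Prec n ω u v ∨ Prec n ω v u) ∧
    (∀ u v w, Prec n ω u v → Prec n ω (u + w) (v + w)) ∧
    (∀ u, u ≠ 0 → Prec n ω 0 u) ∧
    (∀ k, 1 ≤ k → k ≤ n →
      MvPolynomial.coeff (Finsupp.single ((k : ℕ) : Fin (n + 2)) (alphaK ω k))
          (Ghat n ω θ β k) = -1 ∧
        ∀ m ∈ (Ghat n ω θ β k).support,
          m ≠ Finsupp.single ((k : ℕ) : Fin (n + 2)) (alphaK ω k) →
            Prec n ω m (Finsupp.single ((k : ℕ) : Fin (n + 2)) (alphaK ω k))) := by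
  refine ⟨fun u => ?_, fun u v w => ?_, fun u v huv => ?_, fun u v w => ?_, fun u hu => ?_,
    fun k hk hkn => Ghat_leading_monomial hω halg hβ hk hkn⟩ <;>
    simp only [prec_iff_weightedColexKey_lt, map_add, map_zero]
  · exact lt_irrefl _
  · exact lt_trans
  · exact ((weightedColexKey_injective _).ne huv).lt_or_gt
  · exact fun h => add_lt_add_left h _
  · exact weightedColexKey_pos _ (hω.omegaHat_nonneg hprim) hu

/-- `≺` is a monomial order on `Â` (irreflexive, transitive, total, compatible with
multiplication of monomials, with `1` as least monomial), and for each `1 ≤ k ≤ n` the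
`≺`-largest monomial of `Ĝ_k` is `ŷ_k^{α_k}`, which occurs with coefficient `−1`. -/
theorem stmt7 (n : ℕ) (ω : ℕ → ℤ) (θ : ℕ → ℂ) (β : ℕ → ℕ → ℤ)
    (hω : IsKeySequence n ω) (hprim : IsPrimitive n ω) (halg : IsAlgebraicKeySeq n ω)
    (hθ : ∀ k, 1 ≤ k → k ≤ n → θ k ≠ 0) (hβ : IsRepTuple n ω β) :
    (∀ u, ¬ Prec n ω u u) ∧
    (∀ u v w, Prec n ω u v → Prec n ω v w → Prec n ω u w) ∧
    (∀ u v, u ≠ v → Prec n ω u v ∨ Prec n ω v u) ∧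
    (∀ u v w, Prec n ω u v → Prec n ω (u + w) (v + w)) ∧
    (∀ u, u ≠ 0 → Prec n ω 0 u) ∧
    (∀ k, 1 ≤ k → k ≤ n →
      MvPolynomial.coeff (Finsupp.single ((k : ℕ) : Fin (n + 2)) (alphaK ω k))
          (Ghat n ω θ β k) = -1 ∧
        ∀ m ∈ (Ghat n ω θ β k).support,
          m ≠ Finsupp.single ((k : ℕ) : Fin (n + 2)) (alphaK ω k) →
            Prec n ω m (Finsupp.single ((k : ℕ) : Fin (n + 2)) (alphaK ω k))) :=
  stmt7_general n ω θ β hω hprim halg hβ
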